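/- Let f(x,y) = Σ_{i≥0} Σ_{j≥0} a_{i,j} x^i y^j be a double power series absolutely convergent for |x|,|y| ≤ R. Fix x₀, y₀ with |x₀| < R², |y₀| < R, and |x₀ y₀/y'| ≤ R for all y' on the circle C of radius R' with |y₀| < R' ≤ R. Then the partial generating function f^≤(x₀,y₀) = Σ_{i≥0} Σ_{j≥i} a_{i,j} x₀^i y₀^j satisfies f^≤(x₀,y₀) = (1/(2πi)) ∮_{C} f(x₀y₀/y, y)/(y − y₀) dy, where C is a circle centred at the origin of radius R' with |y₀| < R' and |x₀ y₀|/R' within the radius of convergence of the first argument. -/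

import Mathlib

open Complex Metric Real

/-! On the circle `|y| = R'` the substituted series is dominated by the absolutely convergent
series of `f` at `(|x₀ y₀| / R', R')`, so it may be integrated term by term. The monomial
`a_{ij} x^i y^j` contributes `a_{ij} (x₀ y₀)^i ∮ y^(j - i) / (y - y₀) dy`, and expanding
`1 / (y - y₀)` as a geometric series in `y₀ / y` gives `∮ yⁿ / (y - y₀) dy = 2πi y₀ⁿ` for `n ≥ 0`
and `0` for `n < 0`: only the `y⁻¹` term of the expansion has a nonzero integral. -/

namespace circleIntegral

theorem hasSum_integral_of_norm_le {E ι : Type*} [NormedAddCommGroup E] [NormedSpace ℂ E]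
    [CompleteSpace E] [Countable ι] {f : ι → ℂ → E} {c : ℂ} {R : ℝ} (hR : 0 ≤ R) (hf : ∀ i, ContinuousOn (f i) (sphere c R)) {u : ι → ℝ} (hu : Summable u)
    (hfu : ∀ i, ∀ z ∈ sphere c R, ‖f i z‖ ≤ u i) :
    HasSum (fun i => ∮ z in C(c, R), f i z) (∮ z in C(c, R), ∑' i, f i z) := by
  have hmem : ∀ θ, circleMap c R θ ∈ sphere c R := circleMap_mem_sphere c hR
  refine intervalIntegral.hasSum_integral_of_dominated_convergence (fun i _ => R * u i)
    (fun i => ?_) (fun i => .of_forall fun θ _ => ?_) (.of_forall fun _ _ => hu.mul_left R)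
    intervalIntegrable_const (.of_forall fun θ _ => ?_)
  · simp only [deriv_circleMap]
    exact (((continuous_circleMap 0 R).mul continuous_const).smul
      ((hf i).comp_continuous (continuous_circleMap c R) hmem)).aestronglyMeasurable
  · simpa [norm_smul, abs_of_nonneg hR] using mul_le_mul_of_nonneg_left (hfu i _ (hmem θ)) hR
  · exact ((hu.of_norm_bounded fun i => hfu i _ (hmem θ)).hasSum).const_smul _

theorem integral_zpow {R : ℝ} (hR : R ≠ 0) (n : ℤ) :
    (∮ z in C(0, R), z ^ n) = if n = -1 then 2 * π * I else 0 := by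
  split_ifs with hn
  · simpa [hn] using integral_sub_center_inv 0 hR
  · simpa using integral_sub_zpow_of_ne hn 0 0 R

theorem integral_zpow_div_sub {R : ℝ} {w : ℂ} (hw : ‖w‖ < R) (n : ℤ) :
    (∮ z in C(0, R), z ^ n / (z - w)) = if 0 ≤ n then 2 * π * I * w ^ n.toNat else 0 := by
  have hR : 0 < R := (norm_nonneg w).trans_lt hw
  have hz : ∀ z ∈ sphere (0 : ℂ) R, z ≠ 0 := fun z hz => ne_of_mem_sphere hz hR.ne'
  have hterm : ∀ k : ℕ, (∮ z in C(0, R), (w / z) ^ k * (z⁻¹ * z ^ n)) =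
      if (k : ℤ) = n then 2 * π * I * w ^ k else 0 := by
    intro k
    rw [integral_congr (g := fun z => w ^ k * z ^ (n - k - 1)) hR.le fun z hz' => by
      simp only [zpow_sub₀ (hz z hz'), zpow_natCast, zpow_one, div_pow]
      field_simp, integral_const_mul, integral_zpow hR.ne']
    simp only [show n - k - 1 = -1 ↔ (k : ℤ) = n by omega]
    split_ifs <;> ring
  have hexpand := hasSum_two_pi_I_cauchyPowerSeries_integral (c := 0)
    (ContinuousOn.circleIntegrable hR.le ((continuousOn_zpow₀ n).mono hz)) hw
  simp only [sub_zero, zero_add, smul_eq_mul] at hexpand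
  simp only [hterm] at hexpand
  simp only [div_eq_inv_mul]
  refine hexpand.unique ?_
  split_ifs with hn
  · lift n to ℕ using hn
    simpa using hasSum_single (f := fun k : ℕ => if (k : ℤ) = n then 2 * π * I * w ^ k else 0) n
      fun k hk => if_neg (by exact_mod_cast hk)
  · simp [show ∀ k : ℕ, (k : ℤ) ≠ n by omega]

theorem integral_mul_div_pow_mul_pow_div_sub {R : ℝ} {y₀ : ℂ} (hy₀ : ‖y₀‖ < R) (c x : ℂ)
    (i j : ℕ) :
    (∮ y in C(0, R), c * (x * y₀ / y) ^ i * y ^ j / (y - y₀)) =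
      2 * π * I * if i ≤ j then c * x ^ i * y₀ ^ j else 0 := by
  have hR : 0 < R := (norm_nonneg y₀).trans_lt hy₀
  rw [integral_congr (g := fun y => c * (x * y₀) ^ i * (y ^ ((j : ℤ) - i) / (y - y₀))) hR.le
    fun y hy => by
      simp only [zpow_sub₀ (ne_of_mem_sphere hy hR.ne'), zpow_natCast, div_pow]
      field_simp, integral_const_mul, integral_zpow_div_sub hy₀]
  split_ifs with hij hij' hij'
  · rw [show ((j : ℤ) - i).toNat = j - i by omega, mul_pow, ← pow_sub_mul_pow y₀ hij']
    ring
  all_goals first | omega | simp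

end circleIntegral

theorem norm_mul_div_pow_mul_pow_div_sub_le {R : ℝ} {y y₀ : ℂ} (hy₀ : ‖y₀‖ < R)
    (hy : y ∈ sphere (0 : ℂ) R) (c w : ℂ) (i j : ℕ) :
    ‖c * (w / y) ^ i * y ^ j / (y - y₀)‖ ≤ ‖c‖ * (‖w‖ / R) ^ i * R ^ j / (R - ‖y₀‖) := by
  rw [mem_sphere_zero_iff_norm] at hy
  subst hy
  rw [norm_div, norm_mul, norm_mul, norm_pow, norm_pow, norm_div]
  gcongr
  exact norm_sub_norm_le y y₀

theorem continuousOn_mul_div_pow_mul_pow_div_sub {R : ℝ} {y₀ : ℂ} (hy₀ : ‖y₀‖ < R) (c w : ℂ)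
    (i j : ℕ) : ContinuousOn (fun y => c * (w / y) ^ i * y ^ j / (y - y₀)) (sphere 0 R) := by
  have hR : 0 < R := (norm_nonneg y₀).trans_lt hy₀
  have h₀ : ∀ y ∈ sphere (0 : ℂ) R, y ≠ 0 := fun y hy => ne_of_mem_sphere hy hR.ne'
  have h₁ : ∀ y ∈ sphere (0 : ℂ) R, y - y₀ ≠ 0 := fun y hy => by
    rw [sub_ne_zero]
    rintro rfl
    simp_all
  fun_prop (disch := assumption)

theorem stmt_6_general (R : ℝ) (a : ℕ → ℕ → ℂ)
    (hconv : ∀ x y : ℂ, ‖x‖ ≤ R → ‖y‖ ≤ R →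
      Summable (fun p : ℕ × ℕ => ‖a p.1 p.2‖ * ‖x‖ ^ p.1 * ‖y‖ ^ p.2))
    (x₀ y₀ : ℂ) (R' : ℝ) (hR'₁ : ‖y₀‖ < R') (hR'₂ : R' ≤ R) (hxy : ‖x₀ * y₀‖ ≤ R * R') :
    (∑' p : ℕ × ℕ, if p.1 ≤ p.2 then a p.1 p.2 * x₀ ^ p.1 * y₀ ^ p.2 else 0) =
      (1 / (2 * Real.pi * I)) *
        ∮ y in C(0, R'),
          (∑' p : ℕ × ℕ, a p.1 p.2 * (x₀ * y₀ / y) ^ p.1 * y ^ p.2) / (y - y₀) := by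
  have hR' : 0 < R' := (norm_nonneg y₀).trans_lt hR'₁
  set r := ‖x₀ * y₀‖ / R'
  have hr : 0 ≤ r := by positivity
  have hrR : r ≤ R := (div_le_iff₀ hR').2 hxy
  have hmajorant : Summable fun p : ℕ × ℕ => ‖a p.1 p.2‖ * r ^ p.1 * R' ^ p.2 := by
    simpa [abs_of_nonneg hr, abs_of_pos hR'] using
      hconv r R' (by simpa [abs_of_nonneg hr] using hrR) (by simpa [abs_of_pos hR'] using hR'₂)
  have hsum := circleIntegral.hasSum_integral_of_norm_le hR'.le
    (f := fun p y => a p.1 p.2 * (x₀ * y₀ / y) ^ p.1 * y ^ p.2 / (y - y₀))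
    (fun p => continuousOn_mul_div_pow_mul_pow_div_sub hR'₁ _ _ _ _)
    (hmajorant.div_const (R' - ‖y₀‖))
    (fun p y hy => norm_mul_div_pow_mul_pow_div_sub_le hR'₁ hy _ _ _ _)
  simp only [circleIntegral.integral_mul_div_pow_mul_pow_div_sub hR'₁, tsum_div_const] at hsum
  rw [← hsum.tsum_eq, tsum_mul_left, one_div, inv_mul_cancel_left₀ two_pi_I_ne_zero]

/-- Cauchy-integral representation of the partial generating function f^≤. -/
theorem stmt_6 (R : ℝ) (hR : 0 < R) (a : ℕ → ℕ → ℂ)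
    (hconv : ∀ x y : ℂ, ‖x‖ ≤ R → ‖y‖ ≤ R →
      Summable (fun p : ℕ × ℕ => ‖a p.1 p.2‖ * ‖x‖ ^ p.1 * ‖y‖ ^ p.2))
    (x₀ y₀ : ℂ) (hx₀ : ‖x₀‖ < R ^ 2) (hy₀ : ‖y₀‖ < R)
    (R' : ℝ) (hR'₁ : ‖y₀‖ < R') (hR'₂ : R' ≤ R) (hxy : ‖x₀ * y₀‖ ≤ R * R') :
    (∑' p : ℕ × ℕ, if p.1 ≤ p.2 then a p.1 p.2 * x₀ ^ p.1 * y₀ ^ p.2 else 0) =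
      (1 / (2 * Real.pi * I)) *
        ∮ y in C(0, R'),
          (∑' p : ℕ × ℕ, a p.1 p.2 * (x₀ * y₀ / y) ^ p.1 * y ^ p.2) / (y - y₀) :=
  stmt_6_general R a hconv x₀ y₀ R' hR'₁ hR'₂ hxy
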